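/- arXiv:2010.13212 — 6 statements merged into one kernel-verified Lean document; each statement's English description precedes it below -/
import Mathlib

section
/- Let S be a real 2n×2n symplectic matrix that is normal (SᵀS = SSᵀ), and suppose S = U·P where U is orthogonal and symplectic and P is symmetric positive definite and symplectic (the polar decomposition of S). Writing hol(M) := (1/2)((A_M + D_M) + i(C_M − B_M)) for the holomorphic block of a 2n×2n matrix M with n×n blocks [[A_M, B_M],[C_M, D_M]], one has det hol(S) = det hol(U) · det hol(P), and |det hol(U)| = 1. -/
open Matrix

/-- The standard symplectic matrix `J = [[0, −I],[I, 0]]` in `n×n` blocks. -/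
noncomputable def Jmat (n : ℕ) : Matrix (Fin n ⊕ Fin n) (Fin n ⊕ Fin n) ℝ :=
  Matrix.fromBlocks 0 (-1) 1 0

/-- The holomorphic block `hol(M) = (1/2)((A_M + D_M) + i(C_M − B_M))` of a real `2n×2n`
matrix `M` with `n×n` blocks `[[A_M, B_M],[C_M, D_M]]`. -/
noncomputable def hol {n : ℕ} (M : Matrix (Fin n ⊕ Fin n) (Fin n ⊕ Fin n) ℝ) :
    Matrix (Fin n) (Fin n) ℂ :=
  (1 / 2 : ℂ) • ((M.toBlocks₁₁ + M.toBlocks₂₂).map Complex.ofReal +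
    Complex.I • (M.toBlocks₂₁ - M.toBlocks₁₂).map Complex.ofReal)

/-!
A real matrix commuting with `J` has the block form `[[A, B], [-B, A]]`, i.e. it is the realification
of the complex matrix `A - iB`, and on such matrices `hol` returns exactly `A - iB`. Hence `hol` is
multiplicative as soon as the left factor commutes with `J`, and it sends transposes to adjoints.
An orthogonal symplectic `U` commutes with `J` (since `Uᵀ = U⁻¹`), so `hol (U * P) = hol U * hol P`
and `hol U` is unitary, whence `|det hol U| = 1`.
-/

section HolomorphicBlock

variable {n : ℕ}

lemma hol_apply (M : Matrix (Fin n ⊕ Fin n) (Fin n ⊕ Fin n) ℝ) (i j : Fin n) :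
    hol M i j = (1 / 2 : ℂ) * ((M (.inl i) (.inl j) + M (.inr i) (.inr j) : ℂ) +
      Complex.I * (M (.inr i) (.inl j) - M (.inl i) (.inr j) : ℂ)) := by
  simp [hol, toBlocks₁₁, toBlocks₁₂, toBlocks₂₁, toBlocks₂₂]

lemma hol_one : hol (1 : Matrix (Fin n ⊕ Fin n) (Fin n ⊕ Fin n) ℝ) = 1 := by
  ext i j
  by_cases h : i = j
  · subst h; simp [hol_apply]; norm_num
  · simp [hol_apply, one_apply, h]

lemma Jmat_transpose : (Jmat n)ᵀ = -Jmat n := by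
  simp [Jmat, fromBlocks_transpose, fromBlocks_neg]

lemma commute_Jmat_iff {M : Matrix (Fin n ⊕ Fin n) (Fin n ⊕ Fin n) ℝ} :
    Commute (Jmat n) M ↔ M.toBlocks₂₁ = -M.toBlocks₁₂ ∧ M.toBlocks₂₂ = M.toBlocks₁₁ := by
  rw [← fromBlocks_toBlocks M, Commute, SemiconjBy, Jmat, fromBlocks_multiply, fromBlocks_multiply]
  simp only [fromBlocks_inj, toBlocks_fromBlocks₁₁, toBlocks_fromBlocks₁₂, toBlocks_fromBlocks₂₁,
    toBlocks_fromBlocks₂₂, zero_mul, neg_mul, one_mul, zero_add, mul_zero, mul_one, mul_neg,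
    add_zero, neg_inj]
  constructor
  · rintro ⟨h₂₁, h₂₂, -⟩
    exact ⟨neg_eq_iff_eq_neg.mp h₂₁, h₂₂⟩
  · rintro ⟨h₂₁, h₂₂⟩
    simp [h₂₁, h₂₂]

lemma commute_Jmat_transpose {M : Matrix (Fin n ⊕ Fin n) (Fin n ⊕ Fin n) ℝ}
    (h : Commute (Jmat n) M) : Commute (Jmat n) Mᵀ := by
  have := congrArg transpose h.eq
  rw [transpose_mul, transpose_mul, Jmat_transpose, mul_neg, neg_mul, neg_inj] at this
  exact this.symm

lemma commute_Jmat_apply {M : Matrix (Fin n ⊕ Fin n) (Fin n ⊕ Fin n) ℝ} (h : Commute (Jmat n) M)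
    (i j : Fin n) :
    M (.inr i) (.inl j) = -M (.inl i) (.inr j) ∧ M (.inr i) (.inr j) = M (.inl i) (.inl j) := by
  obtain ⟨h₂₁, h₂₂⟩ := commute_Jmat_iff.mp h
  exact ⟨congrFun₂ h₂₁ i j, congrFun₂ h₂₂ i j⟩

lemma hol_mul_of_commute {U : Matrix (Fin n ⊕ Fin n) (Fin n ⊕ Fin n) ℝ} (hU : Commute (Jmat n) U)
    (M : Matrix (Fin n ⊕ Fin n) (Fin n ⊕ Fin n) ℝ) : hol (U * M) = hol U * hol M := by
  ext i j
  simp only [hol_apply, mul_apply, Fintype.sum_sum_type, fun k ↦ commute_Jmat_apply hU i k]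
  push_cast
  simp only [← Finset.sum_add_distrib, ← Finset.sum_sub_distrib, Finset.mul_sum]
  refine Finset.sum_congr rfl fun k _ ↦ ?_
  ring_nf
  rw [Complex.I_sq]
  ring

lemma hol_transpose_of_commute {U : Matrix (Fin n ⊕ Fin n) (Fin n ⊕ Fin n) ℝ}
    (hU : Commute (Jmat n) U) : hol Uᵀ = (hol U)ᴴ := by
  ext i j
  obtain ⟨h₂₁, h₂₂⟩ := commute_Jmat_apply hU j i
  simp [hol_apply, h₂₁, h₂₂, Complex.ext_iff]

lemma commute_Jmat_of_orthogonal_of_symplectic {U : Matrix (Fin n ⊕ Fin n) (Fin n ⊕ Fin n) ℝ}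
    (hUorth : Uᵀ * U = 1) (hUsymp : Uᵀ * Jmat n * U = Jmat n) : Commute (Jmat n) U := by
  have hUUt : U * Uᵀ = 1 := mul_eq_one_comm.mp hUorth
  calc Jmat n * U = U * (Uᵀ * Jmat n * U) := by
        rw [← mul_assoc, ← mul_assoc, hUUt, one_mul]
    _ = U * Jmat n := by rw [hUsymp]

lemma hol_mem_unitaryGroup {U : Matrix (Fin n ⊕ Fin n) (Fin n ⊕ Fin n) ℝ}
    (hU : Commute (Jmat n) U) (hUorth : Uᵀ * U = 1) : hol U ∈ unitaryGroup (Fin n) ℂ := by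
  rw [mem_unitaryGroup_iff', star_eq_conjTranspose, ← hol_transpose_of_commute hU,
    ← hol_mul_of_commute (commute_Jmat_transpose hU), hUorth, hol_one]

end HolomorphicBlock

theorem statement1_general (n : ℕ)
    (S U P : Matrix (Fin n ⊕ Fin n) (Fin n ⊕ Fin n) ℝ)
    (hUP : S = U * P)
    (hUorth : Uᵀ * U = 1)
    (hUsymp : Uᵀ * Jmat n * U = Jmat n) :
    (hol S).det = (hol U).det * (hol P).det ∧ ‖(hol U).det‖ = 1 := by
  have hU := commute_Jmat_of_orthogonal_of_symplectic hUorth hUsymp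
  refine ⟨by rw [hUP, hol_mul_of_commute hU, det_mul], ?_⟩
  exact CStarRing.norm_of_mem_unitary (det_of_mem_unitary (hol_mem_unitaryGroup hU hUorth))

/-- Let `S` be a real `2n×2n` symplectic matrix that is normal, with polar
decomposition `S = U·P` (`U` orthogonal symplectic, `P` symmetric positive definite symplectic).
Then `det hol(S) = det hol(U) · det hol(P)` and `|det hol(U)| = 1`. -/
theorem statement1 (n : ℕ) (hn : 1 ≤ n)
    (S U P : Matrix (Fin n ⊕ Fin n) (Fin n ⊕ Fin n) ℝ)
    (hSsymp : Sᵀ * Jmat n * S = Jmat n)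
    (hnormal : Sᵀ * S = S * Sᵀ)
    (hUP : S = U * P)
    (hUorth : Uᵀ * U = 1)
    (hUsymp : Uᵀ * Jmat n * U = Jmat n)
    (hPsym : P.IsSymm) (hPpos : P.PosDef)
    (hPsymp : Pᵀ * Jmat n * P = Jmat n) :
    (hol S).det = (hol U).det * (hol P).det ∧ ‖(hol U).det‖ = 1 :=
  statement1_general n S U P hUP hUorth hUsymp
end

section
/- Let S be a real 2n×2n symplectic matrix. Then det(SJ + JS) = det(I + J⁻¹S⁻¹JS) = det(I + SᵀS), where I is the 2n×2n identity matrix. -/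
/-!
Since `S⁻¹ = J⁻¹ Sᵀ J` for symplectic `S`, the matrix `J⁻¹ S⁻¹ J S` is literally `Sᵀ S`.
For the first identity, `SJ + JS = SJ (1 + J⁻¹ S⁻¹ J S)`, and `det (SJ) = 1` because symplectic
matrices (`S` and `J` itself) have determinant one.
-/

open Matrix

theorem Jmat_eq_J (n : ℕ) : Jmat n = J (Fin n) ℝ := rfl

section

variable {m R : Type*} [Fintype m] [DecidableEq m] [CommRing R]

theorem Matrix.mul_add_mul_comm_eq_mul_mul_one_add {A B : Matrix m m R}
    (hA : IsUnit A.det) (hB : IsUnit B.det) :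
    A * B + B * A = A * B * (1 + B⁻¹ * A⁻¹ * B * A) := by
  have hAB : A * B * (B⁻¹ * A⁻¹ * B * A) = B * A := by
    simp only [Matrix.mul_assoc, mul_nonsing_inv_cancel_left _ _ hB,
      mul_nonsing_inv_cancel_left _ _ hA]
  rw [Matrix.mul_add, Matrix.mul_one, hAB]

theorem Matrix.det_mul_add_mul_comm {A B : Matrix m m R}
    (hA : IsUnit A.det) (hB : IsUnit B.det) :
    (A * B + B * A).det = A.det * B.det * (1 + B⁻¹ * A⁻¹ * B * A).det := by
  rw [mul_add_mul_comm_eq_mul_mul_one_add hA hB, det_mul, det_mul]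

end

namespace SymplecticGroup

variable {l R : Type*} [Fintype l] [DecidableEq l] [CommRing R]

theorem J_inv_mul_inv_mul_J_mul_self {A : Matrix (l ⊕ l) (l ⊕ l) R}
    (hA : A ∈ symplecticGroup l R) :
    (J l R)⁻¹ * A⁻¹ * J l R * A = Aᵀ * A := by
  rw [J_inv, inv_eq_symplectic_inv A hA]
  simp only [Matrix.neg_mul, Matrix.mul_neg, neg_neg, Matrix.mul_assoc]
  rw [← Matrix.mul_assoc (J l R) (J l R), J_squared, ← Matrix.mul_assoc (J l R) (J l R), J_squared]
  simp

end SymplecticGroup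

open SymplecticGroup in
theorem statement6_general (n : ℕ)
    (S : Matrix (Fin n ⊕ Fin n) (Fin n ⊕ Fin n) ℝ)
    (hsymp : Sᵀ * Jmat n * S = Jmat n) :
    (S * Jmat n + Jmat n * S).det = (1 + (Jmat n)⁻¹ * S⁻¹ * Jmat n * S).det ∧
    (1 + (Jmat n)⁻¹ * S⁻¹ * Jmat n * S).det = (1 + Sᵀ * S).det := by
  rw [Jmat_eq_J] at hsymp ⊢
  have hS : S ∈ symplecticGroup (Fin n) ℝ := mem_iff'.mpr hsymp
  have hdetS : S.det = 1 := det_eq_one hS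
  have hdetJ : (J (Fin n) ℝ).det = 1 := det_eq_one (J_mem _ _)
  refine ⟨?_, by rw [J_inv_mul_inv_mul_J_mul_self hS]⟩
  rw [det_mul_add_mul_comm (hdetS ▸ isUnit_one) (hdetJ ▸ isUnit_one), hdetS, hdetJ,
    one_mul, one_mul]

/-- Let `S` be a real `2n×2n` symplectic matrix. Then
`det(SJ + JS) = det(I + J⁻¹S⁻¹JS) = det(I + SᵀS)`. -/
theorem statement6 (n : ℕ) (hn : 1 ≤ n)
    (S : Matrix (Fin n ⊕ Fin n) (Fin n ⊕ Fin n) ℝ)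
    (hsymp : Sᵀ * Jmat n * S = Jmat n) :
    (S * Jmat n + Jmat n * S).det = (1 + (Jmat n)⁻¹ * S⁻¹ * Jmat n * S).det ∧
    (1 + (Jmat n)⁻¹ * S⁻¹ * Jmat n * S).det = (1 + Sᵀ * S).det :=
  statement6_general n S hsymp
end

section
/- Let S be ANY real 2n×2n matrix written in n×n blocks S = [[A,B],[C,D]]. Then, over ℂ, det((I + iJ) + S(I − iJ)) = 2ⁿ · det((A + D) + i(C − B)), where on the left the determinant is of a complex 2n×2n matrix and on the right of a complex n×n matrix. -/
open Matrix

/-- Let `S` be ANY real `2n×2n` matrix written in `n×n` blocks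
`S = [[A,B],[C,D]]`. Then, over `ℂ`,
`det((I + iJ) + S(I − iJ)) = 2ⁿ · det((A + D) + i(C − B))`. -/
theorem statement7 (n : ℕ) (hn : 1 ≤ n)
    (S : Matrix (Fin n ⊕ Fin n) (Fin n ⊕ Fin n) ℝ)
    (A B C D : Matrix (Fin n) (Fin n) ℝ)
    (hblocks : S = Matrix.fromBlocks A B C D) :
    (((1 : Matrix (Fin n ⊕ Fin n) (Fin n ⊕ Fin n) ℂ) +
        Complex.I • (Jmat n).map Complex.ofReal) +
      (S.map Complex.ofReal) *
        ((1 : Matrix (Fin n ⊕ Fin n) (Fin n ⊕ Fin n) ℂ) -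
          Complex.I • (Jmat n).map Complex.ofReal)).det =
    (2 : ℂ) ^ n * ((A + D).map Complex.ofReal + Complex.I • (C - B).map Complex.ofReal).det := by
  subst hblocks
  set i := Complex.I with hi
  set A' := A.map (Complex.ofReal) with hA'
  set B' := B.map (Complex.ofReal) with hB'
  set C' := C.map (Complex.ofReal) with hC'
  set D' := D.map (Complex.ofReal) with hD'
  have hJ : (Jmat n).map (Complex.ofReal) =
      Matrix.fromBlocks 0 (-1) 1 0 := by
    rw [Jmat, Matrix.fromBlocks_map, Matrix.fromBlocks_inj]
    refine ⟨?_, ?_, ?_, ?_⟩ <;> ext x y <;> simp [Matrix.one_apply, apply_ite]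
  have hS : (Matrix.fromBlocks A B C D).map (Complex.ofReal : ℝ → ℂ) =
      Matrix.fromBlocks A' B' C' D' := Matrix.fromBlocks_map _ _ _ _ _
  set M := (((1 : Matrix (Fin n ⊕ Fin n) (Fin n ⊕ Fin n) ℂ) +
        i • (Jmat n).map Complex.ofReal) +
      ((Matrix.fromBlocks A B C D).map Complex.ofReal) *
        ((1 : Matrix (Fin n ⊕ Fin n) (Fin n ⊕ Fin n) ℂ) -
          i • (Jmat n).map Complex.ofReal)) with hM
  have hMb : M = Matrix.fromBlocks (1 + (A' - i • B')) (-(i • 1) + (i • A' + B'))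
      (i • 1 + (C' - i • D')) (1 + (i • C' + D')) := by
    rw [hM, hJ, hS, ← Matrix.fromBlocks_one]
    simp only [sub_eq_add_neg, Matrix.fromBlocks_smul, Matrix.fromBlocks_add,
      Matrix.fromBlocks_multiply, Matrix.fromBlocks_neg]
    rw [Matrix.fromBlocks_inj]
    refine ⟨?_, ?_, ?_, ?_⟩ <;>
      simp [Matrix.mul_smul, Matrix.smul_mul, smul_smul] <;> abel
  set L : Matrix (Fin n ⊕ Fin n) (Fin n ⊕ Fin n) ℂ :=
    Matrix.fromBlocks 1 0 (-(i • 1)) 1 with hL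
  set T : Matrix (Fin n ⊕ Fin n) (Fin n ⊕ Fin n) ℂ :=
    Matrix.fromBlocks 1 0 (i • 1) 1 with hT
  have hdetL : L.det = 1 := by
    rw [hL, Matrix.det_fromBlocks_zero₁₂]; simp
  have hdetT : T.det = 1 := by
    rw [hT, Matrix.det_fromBlocks_zero₁₂]; simp
  have hii : i * i = -1 := Complex.I_mul_I
  have key : L * M * T = Matrix.fromBlocks ((2:ℂ) • 1) (-(i • 1) + (i • A' + B'))
      0 ((A' + D') + i • (C' - B')) := by
    rw [hMb, hL, hT]
    simp only [Matrix.fromBlocks_multiply]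
    rw [Matrix.fromBlocks_inj]
    refine ⟨?_, ?_, ?_, ?_⟩ <;>
      simp [Matrix.mul_smul, Matrix.smul_mul, smul_smul, hii, smul_add, smul_sub,
        sub_eq_add_neg, two_smul] <;> abel
  have hdetM : M.det = (2:ℂ)^n * ((A' + D') + i • (C' - B')).det := by
    have : (L * M * T).det = M.det := by
      rw [Matrix.det_mul, Matrix.det_mul, hdetL, hdetT]; ring
    rw [← this, key, Matrix.det_fromBlocks_zero₂₁, Matrix.det_smul, Matrix.det_one]
    simp
  rw [hdetM]
  congr 2
  simp [hA', hB', hC', hD', Matrix.map_add, Matrix.map_sub]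
end

section
/- Let S be a real 2n×2n symplectic matrix written in n×n blocks S = [[A,B],[C,D]]. Then |det((A + D) + i(C − B))|² = det(I + SᵀS), where the left-hand determinant is of a complex n×n matrix and the right-hand determinant is of a real 2n×2n matrix. -/
open Matrix

/-!
Write `J` for the standard symplectic form. Since `SᵀJS = J`, the inverse of `Sᵀ` is `-JSJ`, so
`1 + SᵀS = Sᵀ(S - JSJ)`, and `det S = 1`. In blocks, `S - JSJ = [[X, -Y], [Y, X]]` with
`X = A + D`, `Y = C - B`; conjugating by `[[1, i], [0, 1]]` makes this block triangular with
diagonal blocks `X + iY` and `X - iY`, whose determinants are complex conjugate.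
-/

namespace Matrix

variable {l R : Type*} [Fintype l] [DecidableEq l] [CommRing R]

theorem det_fromBlocks_neg_swap (i : R) (hi : i * i = -1) (X Y : Matrix l l R) :
    (fromBlocks X (-Y) Y X).det = (X + i • Y).det * (X - i • Y).det := by
  have hconj : fromBlocks 1 (i • 1) 0 1 * fromBlocks X (-Y) Y X * fromBlocks 1 (-(i • 1)) 0 1 =
      fromBlocks (X + i • Y) 0 Y (X - i • Y) := by
    simp only [fromBlocks_multiply, Matrix.one_mul, Matrix.mul_one, Matrix.zero_mul,
      Matrix.mul_zero, Matrix.smul_mul, Matrix.mul_smul, Matrix.mul_neg,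
      smul_add, smul_zero, smul_smul, hi, neg_smul, one_smul, fromBlocks_inj]
    refine ⟨?_, ?_, ?_, ?_⟩ <;> abel
  simpa [det_fromBlocks_zero₂₁, det_fromBlocks_zero₁₂] using congrArg det hconj

theorem sub_J_mul_fromBlocks_mul_J (A B C D : Matrix l l R) :
    fromBlocks A B C D - J l R * fromBlocks A B C D * J l R =
      fromBlocks (A + D) (-(C - B)) (C - B) (A + D) := by
  simp only [J, fromBlocks_multiply, Matrix.mul_zero, Matrix.zero_mul, Matrix.mul_one,
    Matrix.one_mul, Matrix.mul_neg, Matrix.neg_mul, zero_add, add_zero, neg_neg,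
    sub_eq_add_neg, fromBlocks_neg, fromBlocks_add]
  congr 1 <;> abel

theorem det_one_add_transpose_mul_self_of_mem_symplecticGroup {S : Matrix (l ⊕ l) (l ⊕ l) R}
    (hS : S ∈ symplecticGroup l R) : (1 + Sᵀ * S).det = (S - J l R * S * J l R).det := by
  have hinv : Sᵀ * -(J l R * S * J l R) = 1 := by
    refine mul_eq_one_comm.mp ?_
    simpa [Matrix.mul_assoc] using
      SymplecticGroup.inv_left_mul_aux (SymplecticGroup.transpose_mem hS)
  have hfactor : 1 + Sᵀ * S = Sᵀ * (S - J l R * S * J l R) := by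
    rw [sub_eq_neg_add, Matrix.mul_add, hinv, add_comm]
  rw [hfactor, det_mul, det_transpose, SymplecticGroup.det_eq_one hS, one_mul]

theorem det_fromBlocks_neg_swap_real (X Y : Matrix l l ℝ) :
    (fromBlocks X (-Y) Y X).det =
      ‖(X.map Complex.ofReal + Complex.I • Y.map Complex.ofReal).det‖ ^ 2 := by
  apply Complex.ofReal_injective
  set Z := X.map Complex.ofReal + Complex.I • Y.map Complex.ofReal
  have hmap : (fromBlocks X (-Y) Y X).map Complex.ofReal =
      fromBlocks (X.map Complex.ofReal) (-Y.map Complex.ofReal) (Y.map Complex.ofReal)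
        (X.map Complex.ofReal) := by
    rw [fromBlocks_map, Matrix.map_neg _ Complex.ofReal_neg]
  have hconj : X.map Complex.ofReal - Complex.I • Y.map Complex.ofReal = Z.map (starRingEnd ℂ) := by
    ext i j
    simp [Z, Complex.ext_iff]
  calc ((fromBlocks X (-Y) Y X).det : ℂ)
      = ((fromBlocks X (-Y) Y X).map Complex.ofReal).det := Complex.ofRealHom.map_det _
    _ = Z.det * (Z.map (starRingEnd ℂ)).det := by
      rw [hmap, det_fromBlocks_neg_swap Complex.I Complex.I_mul_I, hconj]
    _ = Z.det * starRingEnd ℂ Z.det := by rw [RingHom.map_det, RingHom.mapMatrix_apply]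
    _ = ((‖Z.det‖ ^ 2 : ℝ) : ℂ) := by rw [Complex.mul_conj, Complex.sq_norm]

end Matrix

theorem statement8_general (n : ℕ)
    (S : Matrix (Fin n ⊕ Fin n) (Fin n ⊕ Fin n) ℝ)
    (A B C D : Matrix (Fin n) (Fin n) ℝ)
    (hblocks : S = Matrix.fromBlocks A B C D)
    (hsymp : Sᵀ * Jmat n * S = Jmat n) :
    ‖((A + D).map Complex.ofReal + Complex.I • (C - B).map Complex.ofReal).det‖ ^ 2 =
      (1 + Sᵀ * S).det := by
  have hS : S ∈ symplecticGroup (Fin n) ℝ := SymplecticGroup.mem_iff'.mpr hsymp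
  rw [det_one_add_transpose_mul_self_of_mem_symplecticGroup hS, hblocks,
    sub_J_mul_fromBlocks_mul_J, det_fromBlocks_neg_swap_real]

/-- Let `S` be a real `2n×2n` symplectic matrix written in `n×n` blocks
`S = [[A,B],[C,D]]`. Then `|det((A + D) + i(C − B))|² = det(I + SᵀS)`. -/
theorem statement8 (n : ℕ) (hn : 1 ≤ n)
    (S : Matrix (Fin n ⊕ Fin n) (Fin n ⊕ Fin n) ℝ)
    (A B C D : Matrix (Fin n) (Fin n) ℝ)
    (hblocks : S = Matrix.fromBlocks A B C D)
    (hsymp : Sᵀ * Jmat n * S = Jmat n) :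
    ‖((A + D).map Complex.ofReal + Complex.I • (C - B).map Complex.ofReal).det‖ ^ 2 =
      (1 + Sᵀ * S).det :=
  statement8_general n S A B C D hblocks hsymp
end

section
/- (Fourier Tauberian theorem, one term) Let ν ≥ 0 and let ψ be a real-valued Schwartz function on ℝ that is even, strictly positive everywhere, whose Fourier transform ψ̂ has compact support, and with ψ̂(0) = ∫ψ = 1. Then there exists a constant C > 0, depending only on ψ and ν, with the following property: for every function N in the class F₊ and every A > 0, if (ψ * dN)(λ) ≤ A λ^ν for all λ ≥ 1, then |N(λ) − (N * ψ)(λ)| ≤ C A λ^ν for all λ ≥ 1. -/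
/-! Since `ψ` is positive, it is bounded below by some `δ > 0` on `[-1, 1]`, so the hypothesis
bounds the `dN`-mass of every window `(t - 1, t + 1]` with `t ≥ 1` by `(A / δ) t ^ ν`. Chaining
about `|μ| / 2` such windows gives `|N λ - N (λ - μ)| ≤ 4 ^ ν (A / δ) λ ^ ν (1 + |μ|) ^ m` with
`m = ⌈ν⌉ + 1`, and integrating this against the probability density `ψ`, which beats every
polynomial weight, gives the claim. Polynomial growth of `N` makes `dN` a tempered measure, so that
`ψ (λ - ·)` is `dN`-integrable and `ψ * dN` is a genuine integral. -/

open Filter Topology MeasureTheory Set Metric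

theorem MeasureTheory.Measure.hasTemperateGrowth_of_measure_closedBall_le {E : Type*}
    [NormedAddCommGroup E] [MeasurableSpace E] [OpensMeasurableSpace E] {μ : Measure E}
    {C : ℝ} {k : ℕ} (h : ∀ n : ℕ, μ (closedBall 0 n) ≤ ENNReal.ofReal (C * (1 + n) ^ k)) :
    μ.HasTemperateGrowth := by
  refine ⟨⟨k + 2, ?_⟩⟩
  set C' := max C 0
  have hpow : ∀ x : E, (1 + ‖x‖) ^ (-((k + 2 : ℕ) : ℝ)) = ((1 + ‖x‖) ^ (k + 2))⁻¹ := fun x ↦ by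
    rw [Real.rpow_neg (by positivity), Real.rpow_natCast]
  simp_rw [hpow]
  refine ⟨((measurable_const.add measurable_norm).pow_const _).inv.aestronglyMeasurable, ?_⟩
  let S : ℕ → Set E := fun n ↦ norm ⁻¹' Ico (n : ℝ) (n + 1)
  have hS : ⋃ n, S n = univ := eq_univ_of_forall fun x ↦
    mem_iUnion.2 ⟨⌊‖x‖⌋₊, Nat.floor_le (norm_nonneg x), Nat.lt_floor_add_one _⟩
  have hshell : ∀ n : ℕ, ∫⁻ x in S n, ‖((1 + ‖x‖) ^ (k + 2))⁻¹‖ₑ ∂μ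
      ≤ ENNReal.ofReal (C' * 2 ^ k * ((n + 1 : ℝ) ^ 2)⁻¹) := by
    intro n
    calc ∫⁻ x in S n, ‖((1 + ‖x‖) ^ (k + 2))⁻¹‖ₑ ∂μ
        ≤ ∫⁻ _ in S n, ENNReal.ofReal (((1 + n : ℝ) ^ (k + 2))⁻¹) ∂μ := by
          refine setLIntegral_mono' (measurable_norm measurableSet_Ico) fun x hx ↦ ?_
          rw [← ofReal_norm, Real.norm_of_nonneg (by positivity)]
          gcongr
          exact hx.1
      _ ≤ ENNReal.ofReal (((1 + n : ℝ) ^ (k + 2))⁻¹) * ENNReal.ofReal (C' * (1 + (n + 1)) ^ k) := by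
          rw [setLIntegral_const]
          gcongr
          calc μ (S n) ≤ μ (closedBall 0 (n + 1 : ℕ)) := measure_mono fun x hx ↦ by
                simpa using hx.2.le
            _ ≤ _ := (h (n + 1)).trans <| ENNReal.ofReal_le_ofReal <| by
                push_cast; gcongr; exact le_max_left _ _
      _ ≤ ENNReal.ofReal (C' * 2 ^ k * ((n + 1 : ℝ) ^ 2)⁻¹) := by
          rw [← ENNReal.ofReal_mul (by positivity)]
          refine ENNReal.ofReal_le_ofReal ?_
          calc ((1 + n : ℝ) ^ (k + 2))⁻¹ * (C' * (1 + (n + 1)) ^ k)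
              ≤ ((1 + n : ℝ) ^ (k + 2))⁻¹ * (C' * (2 * (1 + n)) ^ k) := by
                have : 0 ≤ C' := le_max_right _ _
                gcongr
                linarith
            _ = C' * 2 ^ k * ((n + 1 : ℝ) ^ 2)⁻¹ := by
                rw [mul_pow, pow_add]
                field_simp
                ring
  have hsum : Summable fun n : ℕ ↦ C' * 2 ^ k * ((n + 1 : ℝ) ^ 2)⁻¹ := by
    refine Summable.mul_left _ ?_
    exact_mod_cast (summable_nat_add_iff 1).2 (Real.summable_nat_pow_inv.2 one_lt_two)
  calc ∫⁻ x, ‖((1 + ‖x‖) ^ (k + 2))⁻¹‖ₑ ∂μ = ∫⁻ x in ⋃ n, S n, ‖((1 + ‖x‖) ^ (k + 2))⁻¹‖ₑ ∂μ := by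
        rw [hS, setLIntegral_univ]
    _ ≤ ∑' n, ∫⁻ x in S n, ‖((1 + ‖x‖) ^ (k + 2))⁻¹‖ₑ ∂μ := lintegral_iUnion_le _ _
    _ ≤ ∑' n : ℕ, ENNReal.ofReal (C' * 2 ^ k * ((n + 1 : ℝ) ^ 2)⁻¹) := ENNReal.tsum_le_tsum hshell
    _ < ⊤ := by
        rw [← ENNReal.ofReal_tsum_of_nonneg (fun n ↦ by positivity) hsum]
        exact ENNReal.ofReal_lt_top

theorem StieltjesFunction.measure_closedBall_le (N : StieltjesFunction ℝ)
    (h0 : ∀ x : ℝ, x ≤ 0 → N x = 0) {C : ℝ} {k : ℕ} (hN : ∀ x : ℝ, N x ≤ C * (1 + |x|) ^ k)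
    (n : ℕ) : N.measure (closedBall 0 n) ≤ ENNReal.ofReal (C * (1 + n) ^ k) := by
  calc N.measure (closedBall 0 n) ≤ N.measure (Ioc (-n - 1) n) := by
        rw [Real.closedBall_eq_Icc, zero_sub, zero_add]
        have hn : (0 : ℝ) ≤ n := n.cast_nonneg
        exact measure_mono (Icc_subset_Ioc_iff (by linarith) |>.2 ⟨by linarith, le_rfl⟩)
    _ = ENNReal.ofReal (N n) := by
        rw [N.measure_Ioc, h0 (-n - 1) (by linarith [n.cast_nonneg (α := ℝ)]), sub_zero]
    _ ≤ ENNReal.ofReal (C * (1 + n) ^ k) := by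
        simpa using ENNReal.ofReal_le_ofReal (hN n)

theorem SchwartzMap.integrable_comp_const_sub {E F : Type*} [NormedAddCommGroup E]
    [NormedSpace ℝ E] [MeasurableSpace E] [BorelSpace E] [SecondCountableTopology E]
    [NormedAddCommGroup F] [NormedSpace ℝ F] {μ : Measure E} [μ.HasTemperateGrowth]
    (f : SchwartzMap E F) (a : E) : Integrable (fun x ↦ f (a - x)) μ := by
  have := ((compCLMOfContinuousLinearEquiv ℝ (.neg ℝ) f).compSubConstCLM ℝ a).integrable (μ := μ)
  exact this.congr (.of_forall fun x ↦ by simp)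

theorem SchwartzMap.integrable_one_add_norm_pow_mul {E F : Type*} [NormedAddCommGroup E]
    [NormedSpace ℝ E] [MeasurableSpace E] [BorelSpace E] [SecondCountableTopology E]
    [NormedAddCommGroup F] [NormedSpace ℝ F] {μ : Measure E} [μ.HasTemperateGrowth]
    (f : SchwartzMap E F) (k : ℕ) : Integrable (fun x ↦ (1 + ‖x‖) ^ k * ‖f x‖) μ := by
  refine ((f.integrable.norm.add (f.integrable_pow_mul μ k)).const_mul (2 ^ (k - 1))).mono'
    (by fun_prop) (.of_forall fun x ↦ ?_)
  rw [Real.norm_of_nonneg (by positivity)]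
  calc (1 + ‖x‖) ^ k * ‖f x‖ ≤ 2 ^ (k - 1) * (1 ^ k + ‖x‖ ^ k) * ‖f x‖ := by
        gcongr; exact add_pow_le zero_le_one (norm_nonneg x) k
    _ = _ := by rw [Pi.add_apply]; ring

theorem StieltjesFunction.mul_sub_le_integral (N : StieltjesFunction ℝ) {g : ℝ → ℝ} {a b δ : ℝ}
    (hab : a ≤ b) (hg : Integrable g N.measure) (hg0 : ∀ x, 0 ≤ g x)
    (hδ : ∀ x ∈ Ioc a b, δ ≤ g x) : δ * (N b - N a) ≤ ∫ x, g x ∂N.measure := by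
  have hfin : N.measure (Ioc a b) ≠ ⊤ := by rw [N.measure_Ioc]; exact ENNReal.ofReal_ne_top
  calc δ * (N b - N a) = δ * N.measure.real (Ioc a b) := by
        rw [measureReal_def, N.measure_Ioc, ENNReal.toReal_ofReal (sub_nonneg.2 (N.mono hab))]
    _ ≤ ∫ x in Ioc a b, g x ∂N.measure :=
        setIntegral_ge_of_const_le_real measurableSet_Ioc hfin hδ hg.integrableOn
    _ ≤ ∫ x, g x ∂N.measure := setIntegral_le_integral hg (.of_forall hg0)

section Increments

variable {f : ℝ → ℝ} {B ν : ℝ}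

theorem Monotone.add_two_sub_le_mul_one_add_abs_rpow (hf : Monotone f)
    (h0 : ∀ x : ℝ, x ≤ 0 → f x = 0) (hν : 0 ≤ ν)
    (h : ∀ t : ℝ, 1 ≤ t → f (t + 1) - f (t - 1) ≤ B * t ^ ν) (x : ℝ) :
    f (x + 2) - f x ≤ B * (1 + |x|) ^ ν := by
  rcases le_total x 0 with hx | hx
  · have h1 : f 2 - f 0 ≤ B := by simpa [one_add_one_eq_two] using h 1 le_rfl
    have hB : 0 ≤ B := by linarith [hf (zero_le_two : (0 : ℝ) ≤ 2)]
    calc f (x + 2) - f x ≤ f 2 - f 0 := by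
          rw [h0 x hx, h0 0 le_rfl, sub_zero, sub_zero]; exact hf (by linarith)
      _ ≤ B * 1 := by linarith
      _ ≤ B * (1 + |x|) ^ ν := by
          gcongr; exact Real.one_le_rpow (by linarith [abs_nonneg x]) hν
  · calc f (x + 2) - f x = f (x + 1 + 1) - f (x + 1 - 1) := by ring_nf
      _ ≤ B * (x + 1) ^ ν := h (x + 1) (by linarith)
      _ = B * (1 + |x|) ^ ν := by rw [abs_of_nonneg hx, add_comm 1 x]

theorem add_two_mul_sub_le_of_add_two_sub_le (hν : 0 ≤ ν) (hB : 0 ≤ B)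
    (h : ∀ x : ℝ, f (x + 2) - f x ≤ B * (1 + |x|) ^ ν) (x : ℝ) (n : ℕ) :
    f (x + 2 * n) - f x ≤ n * B * (1 + |x| + 2 * n) ^ ν := by
  induction n with
  | zero => simp
  | succ n ih =>
    have hstep : f (x + 2 * (n + 1)) - f (x + 2 * n) ≤ B * (1 + |x| + 2 * (n + 1)) ^ ν := by
      calc _ ≤ B * (1 + |x + 2 * n|) ^ ν := by simpa [mul_add, add_assoc] using h (x + 2 * n)
        _ ≤ _ := by
          gcongr B * ?_ ^ ν
          linarith [abs_add_le x (2 * n), abs_of_nonneg (by positivity : (0 : ℝ) ≤ 2 * n)]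
    have hmono : (1 + |x| + 2 * n) ^ ν ≤ (1 + |x| + 2 * (n + 1)) ^ ν := by
      gcongr; linarith
    push_cast
    nlinarith [mul_le_mul_of_nonneg_left hmono (by positivity : (0 : ℝ) ≤ n * B)]

theorem Monotone.abs_sub_le_of_add_two_sub_le (hf : Monotone f) (hν : 0 ≤ ν)
    (h : ∀ x : ℝ, f (x + 2) - f x ≤ B * (1 + |x|) ^ ν) {lam : ℝ} (hlam : 1 ≤ lam) (μ : ℝ) :
    |f lam - f (lam - μ)| ≤ 4 ^ ν * B * lam ^ ν * (1 + |μ|) ^ (⌈ν⌉₊ + 1) := by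
  have hB : 0 ≤ B := by
    have := h 0
    norm_num at this
    linarith [hf (by norm_num : (0 : ℝ) ≤ 2)]
  set n := ⌈|μ| / 2⌉₊
  set x := min lam (lam - μ)
  have hn : |μ| ≤ 2 * n := by linarith [Nat.le_ceil (|μ| / 2)]
  have hn' : 2 * (n : ℝ) ≤ |μ| + 2 := by
    linarith [Nat.ceil_lt_add_one (by positivity : 0 ≤ |μ| / 2)]
  have hx : |x| ≤ lam + |μ| := by
    refine abs_le.2 ⟨?_, (min_le_left _ _).trans (by linarith [abs_nonneg μ])⟩
    exact le_min (by linarith [abs_nonneg μ]) (by linarith [le_abs_self μ])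
  have hup : lam ≤ x + 2 * n ∧ lam - μ ≤ x + 2 * n := by
    have h0 : (0 : ℝ) ≤ n := n.cast_nonneg
    have h₁ : lam - 2 * n ≤ x := le_min (by linarith) (by linarith [le_abs_self μ])
    have h₂ : lam - μ - 2 * n ≤ x := le_min (by linarith [neg_le_abs μ]) (by linarith)
    constructor <;> linarith
  have hweight : (1 + |μ|) * (1 + |μ|) ^ ν ≤ (1 + |μ|) ^ (⌈ν⌉₊ + 1) := by
    rw [pow_succ', ← Real.rpow_natCast]
    gcongr
    · linarith [abs_nonneg μ]
    · exact Nat.le_ceil ν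
  calc |f lam - f (lam - μ)|
      ≤ f (x + 2 * n) - f x := by
        rw [← Real.dist_eq]
        exact Real.dist_le_of_mem_Icc (hf.mapsTo_Icc ⟨min_le_left _ _, hup.1⟩)
          (hf.mapsTo_Icc ⟨min_le_right _ _, hup.2⟩)
    _ ≤ n * B * (1 + |x| + 2 * n) ^ ν := add_two_mul_sub_le_of_add_two_sub_le hν hB h x n
    _ ≤ (1 + |μ|) * B * (4 * lam * (1 + |μ|)) ^ ν := by
        gcongr
        · linarith [abs_nonneg μ]
        · nlinarith [abs_nonneg μ]
    _ = 4 ^ ν * B * lam ^ ν * ((1 + |μ|) * (1 + |μ|) ^ ν) := by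
        rw [Real.mul_rpow (by positivity) (by positivity),
          Real.mul_rpow (by positivity) (by positivity)]
        ring
    _ ≤ 4 ^ ν * B * lam ^ ν * (1 + |μ|) ^ (⌈ν⌉₊ + 1) := by gcongr

end Increments

theorem abs_sub_integral_mul_le {α : Type*} [MeasurableSpace α] {μ : Measure α} {ψ g W : α → ℝ}
    {a c : ℝ} (hψ : Integrable ψ μ) (hψ0 : ∀ x, 0 ≤ ψ x) (hψ1 : ∫ x, ψ x ∂μ = 1)
    (hg : AEStronglyMeasurable g μ) (hW : Integrable (fun x ↦ W x * ψ x) μ)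
    (hgW : ∀ x, |a - g x| ≤ c * W x) :
    |a - ∫ x, g x * ψ x ∂μ| ≤ c * ∫ x, W x * ψ x ∂μ := by
  have hbound : ∀ x, ‖(a - g x) * ψ x‖ ≤ c * (W x * ψ x) := fun x ↦ by
    rw [norm_mul, Real.norm_eq_abs, Real.norm_of_nonneg (hψ0 x), ← mul_assoc]
    exact mul_le_mul_of_nonneg_right (hgW x) (hψ0 x)
  have hdiff : Integrable (fun x ↦ (a - g x) * ψ x) μ :=
    (hW.const_mul c).mono' ((aestronglyMeasurable_const.sub hg).mul hψ.aestronglyMeasurable)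
      (.of_forall hbound)
  have hsplit : a - ∫ x, g x * ψ x ∂μ = ∫ x, (a - g x) * ψ x ∂μ := by
    have : (fun x ↦ g x * ψ x) = fun x ↦ a * ψ x - (a - g x) * ψ x := by ext; ring
    rw [this, integral_sub (hψ.const_mul a) hdiff, integral_const_mul, hψ1]
    ring
  rw [hsplit, ← integral_const_mul]
  exact norm_integral_le_of_norm_le (hW.const_mul c) (.of_forall hbound)

theorem statement14_general (ν : ℝ) (hν : 0 ≤ ν) (ψ : SchwartzMap ℝ ℝ)
    (hpos : ∀ x : ℝ, 0 < ψ x)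
    (hnorm : (∫ x : ℝ, ψ x) = 1) :
    ∃ C : ℝ, 0 < C ∧ ∀ N : StieltjesFunction ℝ,
      (∀ x : ℝ, x ≤ 0 → N x = 0) →
      (∃ C₀ : ℝ, ∃ k : ℕ, ∀ x : ℝ, N x ≤ C₀ * (1 + |x|) ^ k) →
      ∀ A : ℝ, 0 < A →
        (∀ lam : ℝ, 1 ≤ lam → (∫ μ : ℝ, ψ (lam - μ) ∂N.measure) ≤ A * lam ^ ν) →
        ∀ lam : ℝ, 1 ≤ lam →
          |N lam - ∫ μ : ℝ, N (lam - μ) * ψ μ| ≤ C * A * lam ^ ν := by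
  obtain ⟨x₀, -, hx₀⟩ := isCompact_Icc.exists_isMinOn (nonempty_Icc.2 (by norm_num : (-1 : ℝ) ≤ 1))
    ψ.continuous.continuousOn
  have hW : Integrable fun μ : ℝ ↦ (1 + |μ|) ^ (⌈ν⌉₊ + 1) * ψ μ := by
    simpa [Real.norm_of_nonneg (hpos _).le] using
      ψ.integrable_one_add_norm_pow_mul (μ := volume) (⌈ν⌉₊ + 1)
  set I := ∫ μ : ℝ, (1 + |μ|) ^ (⌈ν⌉₊ + 1) * ψ μ
  have hI : 1 ≤ I := hnorm ▸ integral_mono ψ.integrable hW fun μ ↦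
    le_mul_of_one_le_left (hpos μ).le (one_le_pow₀ (by linarith [abs_nonneg μ]))
  refine ⟨4 ^ ν * I / ψ x₀, div_pos (by positivity) (hpos x₀), ?_⟩
  rintro N h0 ⟨C₀, k, hN⟩ A - hsmooth lam hlam
  have := Measure.hasTemperateGrowth_of_measure_closedBall_le (N.measure_closedBall_le h0 hN)
  have hwindow : ∀ t : ℝ, 1 ≤ t → N (t + 1) - N (t - 1) ≤ A / ψ x₀ * t ^ ν := fun t ht ↦ by
    have hmass := N.mul_sub_le_integral (a := t - 1) (b := t + 1) (by linarith)
      (ψ.integrable_comp_const_sub t) (fun μ ↦ (hpos _).le)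
      (fun μ hμ ↦ hx₀ ⟨by linarith [hμ.2], by linarith [hμ.1]⟩)
    rw [div_mul_eq_mul_div, le_div_iff₀ (hpos x₀)]
    linarith [hsmooth t ht]
  have hincr := N.mono.abs_sub_le_of_add_two_sub_le hν
    (N.mono.add_two_sub_le_mul_one_add_abs_rpow h0 hν hwindow) hlam
  calc |N lam - ∫ μ : ℝ, N (lam - μ) * ψ μ| ≤ 4 ^ ν * (A / ψ x₀) * lam ^ ν * I :=
        abs_sub_integral_mul_le ψ.integrable (hpos · |>.le) hnorm
          (N.mono.measurable.comp (measurable_const.sub measurable_id)).aestronglyMeasurable hW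
          hincr
    _ = 4 ^ ν * I / ψ x₀ * A * lam ^ ν := by ring

/-- **Fourier Tauberian theorem, one term.** Let `ν ≥ 0` and let `ψ` be a
real-valued Schwartz function on `ℝ` that is even, strictly positive, whose Fourier transform
`ψ̂(t) = ∫ e^{−iλt}ψ(λ)dλ` has compact support, and with `ψ̂(0) = ∫ψ = 1`. Then there is a
constant `C > 0` depending only on `ψ, ν` such that: for every `N` in the class `F₊` (monotone
nondecreasing, right continuous — encoded as a Stieltjes function —, vanishing on `(−∞,0]`, of
polynomial growth) and every `A > 0`, if `(ψ * dN)(λ) ≤ A λ^ν` for all `λ ≥ 1`, then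
`|N(λ) − (N * ψ)(λ)| ≤ C A λ^ν` for all `λ ≥ 1`. -/
theorem statement14 (ν : ℝ) (hν : 0 ≤ ν) (ψ : SchwartzMap ℝ ℝ)
    (heven : ∀ x : ℝ, ψ (-x) = ψ x)
    (hpos : ∀ x : ℝ, 0 < ψ x)
    (hhatcs : HasCompactSupport fun t : ℝ =>
      ∫ x : ℝ, Complex.exp (-(Complex.I * (t : ℂ) * (x : ℂ))) * (ψ x : ℂ))
    (hhat0 : (∫ x : ℝ, Complex.exp (-(Complex.I * (0 : ℂ) * (x : ℂ))) * (ψ x : ℂ)) = 1)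
    (hnorm : (∫ x : ℝ, ψ x) = 1) :
    ∃ C : ℝ, 0 < C ∧ ∀ N : StieltjesFunction ℝ,
      (∀ x : ℝ, x ≤ 0 → N x = 0) →
      (∃ C₀ : ℝ, ∃ k : ℕ, ∀ x : ℝ, N x ≤ C₀ * (1 + |x|) ^ k) →
      ∀ A : ℝ, 0 < A →
        (∀ lam : ℝ, 1 ≤ lam → (∫ μ : ℝ, ψ (lam - μ) ∂N.measure) ≤ A * lam ^ ν) →
        ∀ lam : ℝ, 1 ≤ lam →
          |N lam - ∫ μ : ℝ, N (lam - μ) * ψ μ| ≤ C * A * lam ^ ν :=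
  statement14_general ν hν ψ hpos hnorm
end

section
/- (Riccati/Jacobi identity for Gaussian beams) Let Y and Ẏ be complex n×n matrices with Y invertible, satisfying Y*Ẏ − Ẏ*Y = iI and YᵗẎ − ẎᵗY = 0 (where Y* is the conjugate transpose and Yᵗ the transpose). Then Γ := Ẏ Y⁻¹ is a symmetric complex matrix (Γᵗ = Γ), and its imaginary part Im Γ = (Γ − Γ*)/(2i) equals (1/2)(Y Y*)⁻¹; in particular Im Γ is positive definite. -/
open Matrix
open scoped ComplexOrder

theorem posDef_mul_conjTranspose_self_of_isUnit {n : ℕ}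
    (Y : Matrix (Fin n) (Fin n) ℂ) (hY : IsUnit Y.det) : (Y * Yᴴ).PosDef := by
  refine posDef_iff_dotProduct_mulVec.mpr ⟨isHermitian_mul_conjTranspose_self Y, fun x hx => ?_⟩
  have hdetH : IsUnit (Yᴴ).det := by rw [det_conjTranspose]; exact hY.star
  have hinj := mulVec_injective_iff_isUnit.mpr ((isUnit_iff_isUnit_det _).2 hdetH)
  have hx' : Yᴴ *ᵥ x ≠ 0 := fun h => hx (hinj (by simpa using h))
  have key : star x ⬝ᵥ (Y * Yᴴ) *ᵥ x = star (Yᴴ *ᵥ x) ⬝ᵥ (Yᴴ *ᵥ x) := by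
    rw [← mulVec_mulVec, dotProduct_mulVec]
    congr 1
    conv_lhs => rw [← conjTranspose_conjTranspose Y]
    rw [← star_mulVec]
  rw [key]
  exact dotProduct_star_self_pos_iff.mpr hx'

/-- **Riccati/Jacobi identity for Gaussian beams.** Let `Y` and `Ẏ` be complex
`n×n` matrices with `Y` invertible, satisfying `Y*Ẏ − Ẏ*Y = iI` and `YᵗẎ − ẎᵗY = 0`. Then
`Γ := Ẏ Y⁻¹` is symmetric (`Γᵗ = Γ`), its imaginary part `Im Γ = (Γ − Γ*)/(2i)` equals
`(1/2)(Y Y*)⁻¹`, and in particular `Im Γ` is positive definite. -/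
theorem statement19 (n : ℕ) (Y Ydot : Matrix (Fin n) (Fin n) ℂ)
    (hY : IsUnit Y.det)
    (h1 : Yᴴ * Ydot - Ydotᴴ * Y = Complex.I • (1 : Matrix (Fin n) (Fin n) ℂ))
    (h2 : Yᵀ * Ydot - Ydotᵀ * Y = 0) :
    (Ydot * Y⁻¹)ᵀ = Ydot * Y⁻¹ ∧
    (2 * Complex.I)⁻¹ • (Ydot * Y⁻¹ - (Ydot * Y⁻¹)ᴴ) = (1 / 2 : ℂ) • (Y * Yᴴ)⁻¹ ∧
    ((2 * Complex.I)⁻¹ • (Ydot * Y⁻¹ - (Ydot * Y⁻¹)ᴴ)).PosDef := by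
  have hYi : Y * Y⁻¹ = 1 := mul_nonsing_inv _ hY
  have hdetH : IsUnit (Yᴴ).det := by rw [det_conjTranspose]; exact hY.star
  have hHi : (Yᴴ)⁻¹ * Yᴴ = 1 := nonsing_inv_mul _ hdetH
  have h2' : Yᵀ * Ydot = Ydotᵀ * Y := sub_eq_zero.mp h2
  -- symmetry
  have hsym : (Ydot * Y⁻¹)ᵀ = Ydot * Y⁻¹ := by
    rw [transpose_mul, transpose_nonsing_inv]
    have hd : Ydotᵀ = Yᵀ * Ydot * Y⁻¹ := by
      rw [h2', mul_assoc, hYi, mul_one]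
    rw [hd, ← mul_assoc, ← mul_assoc, nonsing_inv_mul _ (by rwa [det_transpose]),
      one_mul]
  -- imaginary part identity
  have key : Ydot * Y⁻¹ - (Ydot * Y⁻¹)ᴴ = (Yᴴ)⁻¹ * (Yᴴ * Ydot - Ydotᴴ * Y) * Y⁻¹ := by
    rw [mul_sub, sub_mul]
    congr 1
    · rw [← mul_assoc, hHi, one_mul]
    · rw [conjTranspose_mul, conjTranspose_nonsing_inv, mul_assoc Yᴴ⁻¹, mul_assoc,
        hYi, mul_one]
  have keyS : (2 * Complex.I)⁻¹ • (Ydot * Y⁻¹ - (Ydot * Y⁻¹)ᴴ) = (1 / 2 : ℂ) • (Y * Yᴴ)⁻¹ := by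
    rw [key, h1, Matrix.mul_smul, mul_one, Matrix.smul_mul, ← Matrix.mul_inv_rev,
      smul_smul, mul_inv, inv_mul_cancel_right₀ Complex.I_ne_zero]
    norm_num
  refine ⟨hsym, keyS, ?_⟩
  rw [keyS]
  have hpd : (Y * Yᴴ)⁻¹.PosDef :=
    (posDef_mul_conjTranspose_self_of_isUnit Y hY).inv
  have hhalf : (0 : ℂ) < 1 / 2 := by
    rw [Complex.lt_def]; norm_num
  refine posDef_iff_dotProduct_mulVec.mpr ⟨?_, ?_⟩
  · show ((1 / 2 : ℂ) • (Y * Yᴴ)⁻¹)ᴴ = _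
    rw [conjTranspose_smul, hpd.isHermitian.eq]
    norm_num
  · intro x hx
    have hp := hpd.dotProduct_mulVec_pos hx
    rw [Matrix.smul_mulVec, dotProduct_smul]
    exact mul_pos hhalf hp
end
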